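/- The function V̂₁ satisfies the Hamilton–Jacobi–Bellman equation of the problem with control set A = {−1,1}: for every x in (−1,1) with x ≠ 0, the maximum over a ∈ {−1,1} of (a²/2)·V̂₁''(x) − (a+2)·V̂₁(x) equals 0, and this maximum is attained at a = sgn(x); moreover the boundary conditions V̂₁(1) = −sinh(√6) and V̂₁(−1) = √3·sinh(√2) hold. -/

import Mathlib

/-!
Away from `0`, `V̂₁` is locally `k · sinh (c · x)`, so `V̂₁'' = c² V̂₁` with `c² = 2 (sgn x + 2)`,
i.e. twice the killing rate of the control `a = sgn x`. Since `a² = 1` on `{-1, 1}`, the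
Hamiltonian at `a` is then `(sgn x - a) · V̂₁ x`: it vanishes at `a = sgn x`, and at `a = -sgn x`
it equals `2 sgn x · V̂₁ x ≤ 0` because `V̂₁` has the sign opposite to `x`.
-/

open Real Filter Topology

/-- The candidate value function of the infinite-horizon control problem with
control set `{-1, 1}`. -/
noncomputable def Vhat1 (x : ℝ) : ℝ :=
  if 0 ≤ x then -Real.sinh (Real.sqrt 6 * x) else -Real.sqrt 3 * Real.sinh (Real.sqrt 2 * x)

theorem deriv_const_mul_sinh_mul (k c : ℝ) :
    deriv (fun y => k * sinh (c * y)) = fun y => k * c * cosh (c * y) := by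
  funext y
  refine (((hasDerivAt_id y).const_mul c).sinh.const_mul k).deriv.trans ?_
  simp only [id, mul_one]
  ring

theorem deriv_deriv_const_mul_sinh_mul (k c x : ℝ) :
    deriv (deriv fun y => k * sinh (c * y)) x = c ^ 2 * (k * sinh (c * x)) := by
  rw [deriv_const_mul_sinh_mul]
  refine (((hasDerivAt_id x).const_mul c).cosh.const_mul (k * c)).deriv.trans ?_
  simp only [id, mul_one]
  ring

theorem isGreatest_hamiltonian_pm_one {s v d : ℝ} (hs : s = -1 ∨ s = 1)
    (hd : d = 2 * (s + 2) * v) (hsv : s * v ≤ 0) :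
    IsGreatest ((fun a : ℝ => a ^ 2 / 2 * d - (a + 2) * v) '' {-1, 1}) 0 ∧
      s ^ 2 / 2 * d - (s + 2) * v = 0 := by
  have hval : ∀ a ∈ ({-1, 1} : Set ℝ), a ^ 2 / 2 * d - (a + 2) * v = (s - a) * v := by
    rintro a (rfl | rfl) <;> rcases hs with rfl | rfl <;> subst hd <;> ring
  have hs_mem : s ∈ ({-1, 1} : Set ℝ) := hs
  have hs_zero : s ^ 2 / 2 * d - (s + 2) * v = 0 := by rw [hval s hs_mem, sub_self, zero_mul]
  refine ⟨⟨⟨s, hs_mem, hs_zero⟩, ?_⟩, hs_zero⟩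
  rintro _ ⟨a, ha, rfl⟩
  dsimp only
  rw [hval a ha]
  rcases ha with rfl | rfl <;> rcases hs with rfl | rfl <;> linarith

theorem Vhat1_eventuallyEq_of_pos {x : ℝ} (hx : 0 < x) :
    Vhat1 =ᶠ[𝓝 x] fun y => -1 * sinh (√6 * y) := by
  filter_upwards [lt_mem_nhds hx] with y hy
  simp [Vhat1, hy.le]

theorem Vhat1_eventuallyEq_of_neg {x : ℝ} (hx : x < 0) :
    Vhat1 =ᶠ[𝓝 x] fun y => -√3 * sinh (√2 * y) := by
  filter_upwards [gt_mem_nhds hx] with y hy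
  simp [Vhat1, hy.not_ge]

theorem deriv_deriv_Vhat1 {x : ℝ} (hx : x ≠ 0) :
    deriv (deriv Vhat1) x = 2 * (sign x + 2) * Vhat1 x := by
  rcases hx.lt_or_gt with hx | hx
  · have hV := Vhat1_eventuallyEq_of_neg hx
    rw [hV.deriv.deriv_eq, deriv_deriv_const_mul_sinh_mul, hV.eq_of_nhds, sign_of_neg hx,
      sq_sqrt (by norm_num)]
    ring
  · have hV := Vhat1_eventuallyEq_of_pos hx
    rw [hV.deriv.deriv_eq, deriv_deriv_const_mul_sinh_mul, hV.eq_of_nhds, sign_of_pos hx,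
      sq_sqrt (by norm_num)]
    ring

theorem sign_mul_Vhat1_nonpos (x : ℝ) : sign x * Vhat1 x ≤ 0 := by
  rcases lt_trichotomy x 0 with hx | rfl | hx
  · have : sinh (√2 * x) < 0 := sinh_neg_iff.2 (mul_neg_of_pos_of_neg (by positivity) hx)
    rw [sign_of_neg hx, Vhat1, if_neg hx.not_ge]
    nlinarith [sqrt_nonneg 3]
  · simp
  · have : 0 < sinh (√6 * x) := sinh_pos_iff.2 (by positivity)
    rw [sign_of_pos hx, Vhat1, if_pos hx.le]
    linarith

/-- `V̂₁` satisfies the HJB equation with control set `A = {-1, 1}`: for every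
`x ∈ (-1,1) \ {0}`, the maximum over `a ∈ {-1,1}` of
`(a²/2) V̂₁''(x) - (a+2) V̂₁(x)` equals `0` and is attained at `a = sgn x`;
moreover the boundary conditions hold. -/
theorem Vhat1_HJB :
    (∀ x ∈ Set.Ioo (-1 : ℝ) 1, x ≠ 0 →
      IsGreatest
        ((fun a : ℝ => a ^ 2 / 2 * deriv (deriv Vhat1) x - (a + 2) * Vhat1 x) ''
          ({-1, 1} : Set ℝ)) 0 ∧
      (Real.sign x) ^ 2 / 2 * deriv (deriv Vhat1) x - (Real.sign x + 2) * Vhat1 x = 0) ∧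
    Vhat1 1 = -Real.sinh (Real.sqrt 6) ∧
    Vhat1 (-1) = Real.sqrt 3 * Real.sinh (Real.sqrt 2) := by
  refine ⟨fun x _ hx => ?_, by simp [Vhat1], by simp [Vhat1, sinh_neg]⟩
  exact isGreatest_hamiltonian_pm_one (sign_apply_eq_of_ne_zero x hx) (deriv_deriv_Vhat1 hx)
    (sign_mul_Vhat1_nonpos x)
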